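/- For all x, y ∈ X and n ≥ 1, dist_n(x,y) ≤ d_n(orb x, orb y), where d_n(u,v) = max_{0≤k≤n-1} d(σ^k(u), σ^k(v)); consequently every (n,ε)-separated subset of X maps under the orbit map to an (n,ε)-separated subset of orb X, so N(n,ε,X) ≤ N(n,ε,orb X), and hence h(f) ≤ h_F(f). -/

import Mathlib

open scoped ENNReal

/-- The metric `d({x_i},{y_i}) = Σ_{i=1}^∞ dist(x_i,y_i)/2^{i-1}` on the sequence space
`Y^ℕ` (indexed here from `0`, with weight `1/2^i` on the `i`-th coordinate). -/
noncomputable def seqDist {Y : Type*} [MetricSpace Y] (x y : ℕ → Y) : ℝ :=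
  ∑' i : ℕ, dist (x i) (y i) / 2 ^ i

/-- The left shift `σ` on `Y^ℕ`. -/
def shift {Y : Type*} (y : ℕ → Y) : ℕ → Y := fun i => y (i + 1)

/-- The orbit map of `f : X → X`, `X ⊆ Y`: `ω(x) = (x, f(x), f²(x), ...) ∈ Y^ℕ`. -/
noncomputable def orbMap {Y : Type*} [MetricSpace Y] {X : Set Y} (f : X → X) (x : X) :
    ℕ → Y := fun i => (f^[i] x : Y)

/-- The Bowen dynamical distance `dist_n(x,y) = max_{0 ≤ k ≤ n-1} dist (f^k x) (f^k y)`. -/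
noncomputable def dynDist {X : Type*} [MetricSpace X] (f : X → X) (n : ℕ) (x y : X) : ℝ :=
  ⨆ k : Fin n, dist (f^[(k : ℕ)] x) (f^[(k : ℕ)] y)

/-- The dynamical distance `d_n(u,v) = max_{0 ≤ k ≤ n-1} d(σ^k u, σ^k v)` for the shift `σ`
on `(Y^ℕ, d)`. -/
noncomputable def seqDynDist {Y : Type*} [MetricSpace Y] (n : ℕ) (u v : ℕ → Y) : ℝ :=
  ⨆ k : Fin n, seqDist (shift^[(k : ℕ)] u) (shift^[(k : ℕ)] v)

/-- `N(n,ε,X)` for `f`: the maximal cardinality of an `(n,ε)`-separated subset of `X`. -/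
noncomputable def sepNum {X : Type*} [MetricSpace X] (f : X → X) (n : ℕ) (ε : ℝ)
    (K : Set X) : ℕ∞ :=
  ⨆ S ∈ {S : Set X | S ⊆ K ∧ ∀ x ∈ S, ∀ y ∈ S, x ≠ y → ε ≤ dynDist f n x y}, S.encard

/-- `N(n,ε,K)` for the shift on `(Y^ℕ, d)`: the maximal cardinality of a subset of `K`
which is `(n,ε)`-separated for the metrics `d_n`. -/
noncomputable def seqSepNum {Y : Type*} [MetricSpace Y] (n : ℕ) (ε : ℝ)
    (K : Set (ℕ → Y)) : ℕ∞ :=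
  ⨆ S ∈ {S : Set (ℕ → Y) | S ⊆ K ∧ ∀ u ∈ S, ∀ v ∈ S, u ≠ v → ε ≤ seqDynDist n u v}, S.encard

/-- The topological entropy `h(f) = h(f,X)` of `f : X → X` via `(n,ε)`-separated sets. -/
noncomputable def dynEntropy {X : Type*} [MetricSpace X] (f : X → X) : EReal :=
  ⨆ ε : {ε : ℝ // 0 < ε},
    Filter.atTop.limsup fun n : ℕ =>
      ENNReal.log (sepNum f n ε.1 Set.univ : ℝ≥0∞) / (n : EReal)

/-- The entropy `h_F(f) = h(σ, 𝒳)` of the shift on the closure `𝒳` of the orbit space,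
via `(n,ε)`-separated sets for the metric `d`. -/
noncomputable def orbitEntropy {Y : Type*} [MetricSpace Y] {X : Set Y} (f : X → X) : EReal :=
  ⨆ ε : {ε : ℝ // 0 < ε},
    Filter.atTop.limsup fun n : ℕ =>
      ENNReal.log (seqSepNum n ε.1 (closure (Set.range (orbMap f))) : ℝ≥0∞) / (n : EReal)

/-! The `k`-th iterate of the shift maps `orb x` to `orb (f^k x)`, and `d(u, v)` dominates its
zeroth term `dist (u 0) (v 0)` because the series has nonnegative summable terms (`Y` is
bounded); hence `d(σ^k orb x, σ^k orb y) ≥ dist (f^k x) (f^k y)` for every `k`. The orbit map is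
injective, so it sends `(n,ε)`-separated sets to `(n,ε)`-separated sets of the same cardinality,
and the entropy inequality follows by monotonicity of `log`, of division by `n`, of `limsup`
and of the supremum over `ε`, using `orb X ⊆ closure (orb X)`. -/

lemma summable_dist_div_two_pow {Y : Type*} [MetricSpace Y] [BoundedSpace Y] (u v : ℕ → Y) :
    Summable fun i => dist (u i) (v i) / 2 ^ i := by
  refine (summable_geometric_two.mul_left (Metric.diam (Set.univ : Set Y))).of_nonneg_of_le
    (fun i => by positivity) fun i => ?_
  rw [one_div, inv_pow, ← div_eq_mul_inv]
  gcongr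
  exact Metric.dist_le_diam_of_mem (Bornology.isBounded_univ.2 ‹_›) trivial trivial

lemma dist_zero_le_seqDist {Y : Type*} [MetricSpace Y] [BoundedSpace Y] (u v : ℕ → Y) :
    dist (u 0) (v 0) ≤ seqDist u v := by
  simpa [seqDist] using (summable_dist_div_two_pow u v).le_tsum 0 fun i _ => by positivity

lemma shift_iterate_apply {Y : Type*} (u : ℕ → Y) (k i : ℕ) : shift^[k] u i = u (i + k) := by
  induction k generalizing u with
  | zero => rfl
  | succ k ih => rw [Function.iterate_succ_apply, ih]; rfl

lemma shift_iterate_orbMap {Y : Type*} [MetricSpace Y] {X : Set Y} (f : X → X) (x : X)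
    (k : ℕ) : shift^[k] (orbMap f x) = orbMap f (f^[k] x) := by
  funext i
  simp only [shift_iterate_apply, orbMap, Function.iterate_add_apply]

lemma dynDist_le_seqDynDist_orbMap {Y : Type*} [MetricSpace Y] [BoundedSpace Y] {X : Set Y}
    (f : X → X) (n : ℕ) (x y : X) :
    dynDist f n x y ≤ seqDynDist n (orbMap f x) (orbMap f y) := by
  refine ciSup_mono (Set.finite_range _).bddAbove fun k => ?_
  rw [shift_iterate_orbMap, shift_iterate_orbMap]
  exact dist_zero_le_seqDist (orbMap f _) (orbMap f _)

lemma orbMap_injective {Y : Type*} [MetricSpace Y] {X : Set Y} (f : X → X) :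
    Function.Injective (orbMap f) :=
  fun _ _ h => Subtype.coe_injective (congrFun h 0)

lemma le_seqDynDist_of_mem_image_orbMap {Y : Type*} [MetricSpace Y] [BoundedSpace Y]
    {X : Set Y} (f : X → X) (n : ℕ) (ε : ℝ) (S : Set X)
    (hS : ∀ x ∈ S, ∀ y ∈ S, x ≠ y → ε ≤ dynDist f n x y) :
    ∀ u ∈ orbMap f '' S, ∀ v ∈ orbMap f '' S, u ≠ v → ε ≤ seqDynDist n u v := by
  rintro _ ⟨x, hx, rfl⟩ _ ⟨y, hy, rfl⟩ hxy
  exact (hS x hx y hy (ne_of_apply_ne _ hxy)).trans (dynDist_le_seqDynDist_orbMap f n x y)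

lemma sepNum_le_seqSepNum_range {Y : Type*} [MetricSpace Y] [BoundedSpace Y] {X : Set Y}
    (f : X → X) (n : ℕ) (ε : ℝ) :
    sepNum f n ε Set.univ ≤ seqSepNum n ε (Set.range (orbMap f)) := by
  refine iSup₂_le fun S hS => ?_
  rw [← (orbMap_injective f).injOn.encard_image]
  exact le_iSup₂_of_le (orbMap f '' S)
    ⟨Set.image_subset_range _ _, le_seqDynDist_of_mem_image_orbMap f n ε S hS.2⟩ le_rfl

lemma seqSepNum_mono {Y : Type*} [MetricSpace Y] (n : ℕ) (ε : ℝ) {K K' : Set (ℕ → Y)}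
    (h : K ⊆ K') : seqSepNum n ε K ≤ seqSepNum n ε K' :=
  iSup₂_le fun S hS => le_iSup₂_of_le S ⟨hS.1.trans h, hS.2⟩ le_rfl

lemma dynEntropy_le_orbitEntropy {Y : Type*} [MetricSpace Y] [BoundedSpace Y] {X : Set Y}
    (f : X → X) : dynEntropy f ≤ orbitEntropy f := by
  refine iSup_mono fun ε => Filter.limsup_le_limsup (.of_forall fun n => ?_)
  refine EReal.div_le_div_right_of_nonneg (by exact_mod_cast n.zero_le) (ENNReal.log_monotone ?_)
  exact_mod_cast (sepNum_le_seqSepNum_range f n ε).trans (seqSepNum_mono n ε subset_closure)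

theorem entropy_le_orbit_entropy_general {Y : Type*} [MetricSpace Y] [CompactSpace Y]
    {X : Set Y} (f : X → X) :
    (∀ (x y : X) (n : ℕ), 1 ≤ n →
      dynDist f n x y ≤ seqDynDist n (orbMap f x) (orbMap f y)) ∧
    (∀ (n : ℕ) (ε : ℝ) (S : Set X),
      (∀ x ∈ S, ∀ y ∈ S, x ≠ y → ε ≤ dynDist f n x y) →
      ∀ u ∈ orbMap f '' S, ∀ v ∈ orbMap f '' S, u ≠ v → ε ≤ seqDynDist n u v) ∧
    (∀ (n : ℕ) (ε : ℝ),
      sepNum f n ε Set.univ ≤ seqSepNum n ε (Set.range (orbMap f))) ∧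
    dynEntropy f ≤ orbitEntropy f :=
  ⟨fun x y n _ => dynDist_le_seqDynDist_orbMap f n x y, le_seqDynDist_of_mem_image_orbMap f,
    sepNum_le_seqSepNum_range f, dynEntropy_le_orbitEntropy f⟩

/-- For all `x, y ∈ X` and `n ≥ 1`, `dist_n(x,y) ≤ d_n(orb x, orb y)`; consequently the
orbit map sends `(n,ε)`-separated subsets of `X` to `(n,ε)`-separated subsets of `orb X`,
so `N(n,ε,X) ≤ N(n,ε,orb X)`, and hence `h(f) ≤ h_F(f)`. -/
theorem entropy_le_orbit_entropy {Y : Type*} [MetricSpace Y] [CompactSpace Y]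
    {X : Set Y} (f : X → X) (hf : Continuous f) :
    (∀ (x y : X) (n : ℕ), 1 ≤ n →
      dynDist f n x y ≤ seqDynDist n (orbMap f x) (orbMap f y)) ∧
    (∀ (n : ℕ) (ε : ℝ) (S : Set X),
      (∀ x ∈ S, ∀ y ∈ S, x ≠ y → ε ≤ dynDist f n x y) →
      ∀ u ∈ orbMap f '' S, ∀ v ∈ orbMap f '' S, u ≠ v → ε ≤ seqDynDist n u v) ∧
    (∀ (n : ℕ) (ε : ℝ),
      sepNum f n ε Set.univ ≤ seqSepNum n ε (Set.range (orbMap f))) ∧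
    dynEntropy f ≤ orbitEntropy f :=
  entropy_le_orbit_entropy_general f
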